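/- Let G_1, …, G_B be i.i.d. random real m×n matrices with square-integrable entries, mean matrix M = E[G_1], and row-wise covariance matrix C = E[(G_1 − M)(G_1 − M)ᵀ]. Let Ḡ = (1/B)·(G_1 + ⋯ + G_B) be their average. Then E[‖M − Ḡ‖_{S1}] ≤ tr(C^{1/2}) / √B, where C^{1/2} is the positive semidefinite square root of C. -/

import Mathlib

/-!
For positive definite `Y`, expanding `0 ≤ tr((√X - Y) Y⁻¹ (√X - Y))` gives
`2 tr √X ≤ tr(X Y⁻¹) + tr Y`, with near equality at `Y = √X + ε`. So `tr √X` is an infimum of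
functions affine in `X`, which is what replaces Jensen's inequality: applied pointwise to
`X = D Dᵀ` with `D = M - Ḡ`, it survives taking expectations, and `E[D Dᵀ] = C / B` because the
cross terms between independent samples vanish. Finally `tr √(C / B) = tr √C / √B`.
-/

open MeasureTheory ProbabilityTheory

section
open scoped ComplexOrder
noncomputable def Matrix.PosSemidef.sqrt {n 𝕜 : Type*} [Fintype n] [RCLike 𝕜] [DecidableEq n]
    {A : Matrix n n 𝕜} (hA : A.PosSemidef) : Matrix n n 𝕜 :=
  hA.1.eigenvectorUnitary.1 * Matrix.diagonal ((↑) ∘ (√·) ∘ hA.1.eigenvalues) *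
    (star hA.1.eigenvectorUnitary : Matrix n n 𝕜)
end

/-- The sum of the singular values of `A`. -/
noncomputable def nuclearNorm {m n : ℕ} (A : Matrix (Fin m) (Fin n) ℝ) : ℝ :=
  ((Matrix.posSemidef_self_mul_conjTranspose A).sqrt).trace

open Matrix

namespace Matrix.PosSemidef

section
open scoped ComplexOrder MatrixOrder
variable {k 𝕜 : Type*} [Fintype k] [RCLike 𝕜] [DecidableEq k]

lemma sqrt_eq_cfcSqrt {A : Matrix k k 𝕜} (hA : A.PosSemidef) : hA.sqrt = CFC.sqrt A := by
  rw [CFC.sqrt_eq_cfc, cfc_nnreal_eq_real _ A, hA.1.cfc_eq]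
  simp only [IsHermitian.cfc, Real.coe_sqrt, Real.coe_toNNReal', Unitary.conjStarAlgAut_apply]
  rw [Matrix.PosSemidef.sqrt]
  congr 3
  funext i
  simp [hA.eigenvalues_nonneg i]

lemma posSemidef_sqrt {A : Matrix k k 𝕜} (hA : A.PosSemidef) : hA.sqrt.PosSemidef := by
  rw [hA.sqrt_eq_cfcSqrt]
  exact (CFC.sqrt_nonneg A).posSemidef

lemma sqrt_mul_self {A : Matrix k k 𝕜} (hA : A.PosSemidef) : hA.sqrt * hA.sqrt = A := by
  rw [hA.sqrt_eq_cfcSqrt]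
  exact CFC.sqrt_mul_sqrt_self A hA.nonneg

lemma sqrt_smul {A : Matrix k k 𝕜} (hA : A.PosSemidef) {c : ℝ} (hc : 0 ≤ c) :
    (hA.smul hc).sqrt = √c • hA.sqrt := by
  have hS : (√c • hA.sqrt).PosSemidef := hA.posSemidef_sqrt.smul (Real.sqrt_nonneg c)
  rw [sqrt_eq_cfcSqrt, CFC.sqrt_eq_iff _ _ (hA.smul hc).nonneg hS.nonneg, smul_mul_smul_comm,
    hA.sqrt_mul_self, Real.mul_self_sqrt hc]

end

variable {k : Type*} [Fintype k] [DecidableEq k]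

lemma trace_mul_nonneg {P Q : Matrix k k ℝ} (hP : P.PosSemidef) (hQ : Q.PosSemidef) :
    0 ≤ (P * Q).trace := by
  set T := hQ.sqrt
  have hT : Tᴴ = T := hQ.posSemidef_sqrt.1
  have hcyc : (P * Q).trace = (T * P * Tᴴ).trace := by
    rw [hT, ← hQ.sqrt_mul_self, ← Matrix.mul_assoc, trace_mul_comm, ← Matrix.mul_assoc]
  rw [hcyc]
  exact (hP.mul_mul_conjTranspose_same T).trace_nonneg

lemma two_mul_trace_sqrt_le {X Y : Matrix k k ℝ} (hX : X.PosSemidef) (hY : Y.PosDef) :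
    2 * hX.sqrt.trace ≤ (X * Y⁻¹).trace + Y.trace := by
  set Z := hX.sqrt
  have hYdet : IsUnit Y.det := (isUnit_iff_isUnit_det Y).1 hY.isUnit
  have hZY : (Z - Y)ᴴ = Z - Y := by
    rw [conjTranspose_sub, hX.posSemidef_sqrt.1, hY.isHermitian]
  have hsq : 0 ≤ ((Z - Y) * Y⁻¹ * (Z - Y)).trace := by
    simpa only [hZY] using (hY.inv.posSemidef.mul_mul_conjTranspose_same (Z - Y)).trace_nonneg
  have hexpand : (Z - Y) * Y⁻¹ * (Z - Y) = Z * Y⁻¹ * Z - Z - Z + Y := by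
    simp only [Matrix.sub_mul, Matrix.mul_sub, Matrix.mul_assoc, nonsing_inv_mul _ hYdet,
      mul_nonsing_inv _ hYdet, Matrix.one_mul, Matrix.mul_one]
    abel
  have hcyc : (Z * Y⁻¹ * Z).trace = (X * Y⁻¹).trace := by
    rw [trace_mul_cycle, hX.sqrt_mul_self]
  rw [hexpand, trace_add, trace_sub, trace_sub, hcyc] at hsq
  linarith

lemma le_trace_sqrt_of_forall_posDef {X : Matrix k k ℝ} (hX : X.PosSemidef) {t : ℝ}
    (h : ∀ Y : Matrix k k ℝ, Y.PosDef → 2 * t ≤ (X * Y⁻¹).trace + Y.trace) :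
    t ≤ hX.sqrt.trace := by
  set S := hX.sqrt
  have hS : S.PosSemidef := hX.posSemidef_sqrt
  have hε : ∀ ε : ℝ, 0 < ε → 2 * t ≤ 2 * S.trace + ε * Fintype.card k := by
    intro ε hε
    set Y := S + ε • (1 : Matrix k k ℝ)
    have hY : Y.PosDef := PosDef.posSemidef_add hS (PosDef.one.smul hε)
    have hYdet : IsUnit Y.det := (isUnit_iff_isUnit_det Y).1 hY.isUnit
    have hSY : S * S * Y⁻¹ + ε • (S * Y⁻¹) = S :=
      calc S * S * Y⁻¹ + ε • (S * Y⁻¹) = S * Y * Y⁻¹ := by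
            simp only [Y, Matrix.mul_add, Matrix.add_mul, Matrix.mul_smul, Matrix.mul_one,
              Matrix.smul_mul]
        _ = S := by rw [Matrix.mul_assoc, mul_nonsing_inv _ hYdet, Matrix.mul_one]
    have hXY : (X * Y⁻¹).trace + ε * (S * Y⁻¹).trace = S.trace := by
      rw [← hX.sqrt_mul_self, ← smul_eq_mul (a := ε), ← trace_smul, ← trace_add, hSY]
    have htrY : Y.trace = S.trace + ε * Fintype.card k := by
      simp [Y, trace_add, trace_smul]
    have := h Y hY
    linarith [mul_nonneg hε.le (hS.trace_mul_nonneg hY.inv.posSemidef)]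
  refine le_of_forall_pos_le_add fun δ hδ => ?_
  have hc : (0 : ℝ) ≤ Fintype.card k := Nat.cast_nonneg _
  have hδc : δ / (Fintype.card k + 1) * Fintype.card k ≤ δ := by
    rw [div_mul_eq_mul_div, div_le_iff₀ (by positivity)]
    nlinarith
  linarith [hε _ (by positivity : 0 < δ / (Fintype.card k + 1))]

end Matrix.PosSemidef

namespace ProbabilityTheory

variable {Ω E : Type*} [MeasurableSpace Ω] [MeasurableSpace E] {μ : Measure Ω}

lemma IdentDistrib.covariance_comp {Ω' : Type*} [MeasurableSpace Ω'] {ν : Measure Ω'}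
    {Z : Ω → E} {Z' : Ω' → E} (h : IdentDistrib Z Z' μ ν) {φ ψ : E → ℝ} (hφ : Measurable φ)
    (hψ : Measurable ψ) :
    cov[fun ω => φ (Z ω), fun ω => ψ (Z ω); μ] = cov[fun ω => φ (Z' ω), fun ω => ψ (Z' ω); ν] := by
  rw [← covariance_map_fun hφ.aestronglyMeasurable hψ.aestronglyMeasurable h.aemeasurable_fst,
    h.map_eq,
    covariance_map_fun hφ.aestronglyMeasurable hψ.aestronglyMeasurable h.aemeasurable_snd]

lemma covariance_sampleMean [IsFiniteMeasure μ] {ι : Type*} [Fintype ι] {Z : ι → Ω → E}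
    (hindep : iIndepFun Z μ) {b₀ : ι} (hident : ∀ b, IdentDistrib (Z b) (Z b₀) μ μ)
    {φ ψ : E → ℝ} (hφ : Measurable φ) (hψ : Measurable ψ)
    (hφ₂ : MemLp (fun ω => φ (Z b₀ ω)) 2 μ) (hψ₂ : MemLp (fun ω => ψ (Z b₀ ω)) 2 μ) :
    cov[fun ω => (Fintype.card ι : ℝ)⁻¹ * ∑ b, φ (Z b ω),
        fun ω => (Fintype.card ι : ℝ)⁻¹ * ∑ b, ψ (Z b ω); μ]
      = (Fintype.card ι : ℝ)⁻¹ * cov[fun ω => φ (Z b₀ ω), fun ω => ψ (Z b₀ ω); μ] := by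
  have hφ₂' (b : ι) : MemLp (fun ω => φ (Z b ω)) 2 μ := ((hident b).comp hφ).memLp_iff.2 hφ₂
  have hψ₂' (b : ι) : MemLp (fun ω => ψ (Z b ω)) 2 μ := ((hident b).comp hψ).memLp_iff.2 hψ₂
  have hoff (b b' : ι) (hbb' : b' ≠ b) :
      cov[fun ω => φ (Z b ω), fun ω => ψ (Z b' ω); μ] = 0 :=
    ((hindep.indepFun hbb'.symm).comp hφ hψ).covariance_eq_zero (hφ₂' b) (hψ₂' b')
  have hcard : (Fintype.card ι : ℝ) ≠ 0 := Nat.cast_ne_zero.2 (Fintype.card_pos_iff.2 ⟨b₀⟩).ne'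
  rw [covariance_const_mul_left, covariance_const_mul_right,
    covariance_fun_sum_fun_sum hφ₂' hψ₂',
    Finset.sum_congr rfl fun b _ => Finset.sum_eq_single b (fun b' _ => hoff b b') (by simp)]
  simp only [fun b => (hident b).covariance_comp hφ hψ, Finset.sum_const, Finset.card_univ,
    nsmul_eq_mul]
  field_simp

end ProbabilityTheory

lemma integral_nuclearNorm_le_trace_sqrt {Ω : Type*} [MeasurableSpace Ω] {μ : Measure Ω}
    [IsProbabilityMeasure μ] {m n : ℕ} {D : Ω → Matrix (Fin m) (Fin n) ℝ}
    (hD : ∀ i j, MemLp (fun ω => D ω i j) 2 μ) {K : Matrix (Fin m) (Fin m) ℝ}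
    (hK : K.PosSemidef) (hDK : ∀ i i', ∫ ω, (D ω * (D ω)ᵀ) i i' ∂μ = K i i') :
    ∫ ω, nuclearNorm (D ω) ∂μ ≤ hK.sqrt.trace := by
  refine hK.le_trace_sqrt_of_forall_posDef fun Y hY => ?_
  have hDD (i i' : Fin m) : Integrable (fun ω => (D ω * (D ω)ᵀ) i i') μ := by
    simp only [mul_apply, transpose_apply]
    exact integrable_finsetSum _ fun j _ => (hD i j).integrable_mul (hD i' j)
  have hpointwise (ω : Ω) : 2 * nuclearNorm (D ω) ≤ (D ω * (D ω)ᵀ * Y⁻¹).trace + Y.trace :=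
    ((posSemidef_self_mul_conjTranspose (D ω)).two_mul_trace_sqrt_le hY).trans_eq
      (by rw [conjTranspose_eq_transpose_of_trivial])
  have htrace (A : Matrix (Fin m) (Fin m) ℝ) :
      (A * Y⁻¹).trace = ∑ i, ∑ i', A i i' * Y⁻¹ i' i := by
    simp only [trace, diag, mul_apply]
  have hint : Integrable (fun ω => (D ω * (D ω)ᵀ * Y⁻¹).trace) μ := by
    simp only [htrace]
    exact integrable_finsetSum _ fun i _ => integrable_finsetSum _ fun i' _ =>
      (hDD i i').mul_const _
  have hintegral : ∫ ω, (D ω * (D ω)ᵀ * Y⁻¹).trace ∂μ = (K * Y⁻¹).trace := by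
    simp only [htrace]
    rw [integral_finsetSum _ fun i _ => integrable_finsetSum _ fun i' _ => (hDD i i').mul_const _]
    refine Finset.sum_congr rfl fun i _ => ?_
    rw [integral_finsetSum _ fun i' _ => (hDD i i').mul_const _]
    simp only [integral_mul_const, hDK]
  calc 2 * ∫ ω, nuclearNorm (D ω) ∂μ = ∫ ω, 2 * nuclearNorm (D ω) ∂μ :=
        (integral_const_mul _ _).symm
    _ ≤ ∫ ω, (D ω * (D ω)ᵀ * Y⁻¹).trace + Y.trace ∂μ :=
        integral_mono_of_nonneg (ae_of_all _ fun ω => mul_nonneg zero_le_two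
          (posSemidef_self_mul_conjTranspose (D ω)).posSemidef_sqrt.trace_nonneg)
          (hint.add (integrable_const _)) (ae_of_all _ hpointwise)
    _ = (K * Y⁻¹).trace + Y.trace := by
        rw [integral_add hint (integrable_const _), hintegral, integral_const]
        simp

lemma integral_sub_sampleMean_mul_transpose_apply {Ω ι m n : Type*} [MeasurableSpace Ω]
    {μ : Measure Ω} [IsProbabilityMeasure μ] [Fintype ι] [Fintype n] {G : ι → Ω → m → n → ℝ}
    (hindep : iIndepFun G μ) {b₀ : ι} (hident : ∀ b, IdentDistrib (G b) (G b₀) μ μ)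
    (hsq : ∀ b i j, MemLp (fun ω => G b ω i j) 2 μ) {M : Matrix m n ℝ}
    (hmean : ∀ b i j, ∫ ω, G b ω i j ∂μ = M i j) (i i' : m) :
    ∫ ω, ((M - of fun i j => (Fintype.card ι : ℝ)⁻¹ * ∑ b, G b ω i j) *
        (M - of fun i j => (Fintype.card ι : ℝ)⁻¹ * ∑ b, G b ω i j)ᵀ) i i' ∂μ
      = (Fintype.card ι : ℝ)⁻¹ * ∫ ω, ∑ j, (G b₀ ω i j - M i j) * (G b₀ ω i' j - M i' j) ∂μ := by
  set D : Ω → Matrix m n ℝ :=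
    fun ω => M - of fun i j => (Fintype.card ι : ℝ)⁻¹ * ∑ b, G b ω i j
  have hcoord (i : m) (j : n) : Measurable fun x : m → n → ℝ => x i j :=
    (measurable_pi_apply j).comp (measurable_pi_apply i)
  have hD (i : m) (j : n) : MemLp (fun ω => D ω i j) 2 μ :=
    (memLp_const _).sub ((memLp_finsetSum _ fun b _ => hsq b i j).const_mul _)
  have hmeanAvg (i : m) (j : n) :
      ∫ ω, (Fintype.card ι : ℝ)⁻¹ * ∑ b, G b ω i j ∂μ = M i j := by
    have hcard : (Fintype.card ι : ℝ) ≠ 0 := Nat.cast_ne_zero.2 (Fintype.card_pos_iff.2 ⟨b₀⟩).ne'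
    rw [integral_const_mul, integral_finsetSum _ fun b _ => (hsq b i j).integrable one_le_two]
    simp only [hmean, Finset.sum_const, Finset.card_univ, nsmul_eq_mul]
    field_simp
  have hcovD (j : n) : ∫ ω, D ω i j * D ω i' j ∂μ
      = (Fintype.card ι : ℝ)⁻¹ * ∫ ω, (G b₀ ω i j - M i j) * (G b₀ ω i' j - M i' j) ∂μ := by
    have h := covariance_sampleMean hindep hident (hcoord i j) (hcoord i' j)
      (hsq b₀ i j) (hsq b₀ i' j)
    simp only [covariance, hmeanAvg, hmean] at h
    rw [← h]
    refine integral_congr_ae (ae_of_all _ fun ω => ?_)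
    simp only [D, Matrix.sub_apply, of_apply]
    ring
  calc ∫ ω, (D ω * (D ω)ᵀ) i i' ∂μ = ∑ j, ∫ ω, D ω i j * D ω i' j ∂μ :=
        integral_finsetSum Finset.univ fun j _ => (hD i j).integrable_mul (hD i' j)
    _ = (Fintype.card ι : ℝ)⁻¹ *
          ∑ j, ∫ ω, (G b₀ ω i j - M i j) * (G b₀ ω i' j - M i' j) ∂μ := by
        simp only [hcovD, Finset.mul_sum]
    _ = _ := congrArg _ (integral_finsetSum Finset.univ fun j _ =>
        ((hsq b₀ i j).sub (memLp_const _)).integrable_mul ((hsq b₀ i' j).sub (memLp_const _))).symm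

theorem stmt4_general {m n B : ℕ} (hB : 0 < B)
    {Ω : Type*} [MeasurableSpace Ω] (μ : Measure Ω) [IsProbabilityMeasure μ]
    (G : Fin B → Ω → (Fin m → Fin n → ℝ))
    (hindep : iIndepFun G μ)
    (hident : ∀ b b', IdentDistrib (G b) (G b') μ μ)
    (hsq : ∀ b i j, MemLp (fun ω => G b ω i j) 2 μ)
    (M : Matrix (Fin m) (Fin n) ℝ)
    (hmean : ∀ b i j, ∫ ω, G b ω i j ∂μ = M i j)
    (C : Matrix (Fin m) (Fin m) ℝ)
    (hC : C = Matrix.of fun i i' =>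
      ∫ ω, ∑ j, (G ⟨0, hB⟩ ω i j - M i j) * (G ⟨0, hB⟩ ω i' j - M i' j) ∂μ)
    (hCpsd : C.PosSemidef) :
    ∫ ω, nuclearNorm (M - Matrix.of fun i j => (B : ℝ)⁻¹ * ∑ b, G b ω i j) ∂μ
      ≤ hCpsd.sqrt.trace / Real.sqrt B := by
  set b₀ : Fin B := ⟨0, hB⟩
  set D : Ω → Matrix (Fin m) (Fin n) ℝ :=
    fun ω => M - Matrix.of fun i j => (B : ℝ)⁻¹ * ∑ b, G b ω i j
  have hD (i : Fin m) (j : Fin n) : MemLp (fun ω => D ω i j) 2 μ :=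
    (memLp_const _).sub ((memLp_finsetSum _ fun b _ => hsq b i j).const_mul _)
  have hDK (i i' : Fin m) : ∫ ω, (D ω * (D ω)ᵀ) i i' ∂μ = ((B : ℝ)⁻¹ • C) i i' := by
    simpa only [Fintype.card_fin, hC, Matrix.smul_apply, of_apply, smul_eq_mul] using
      integral_sub_sampleMean_mul_transpose_apply hindep (fun b => hident b b₀) hsq hmean i i'
  have hBinv : (0 : ℝ) ≤ (B : ℝ)⁻¹ := by positivity
  calc _ ≤ (hCpsd.smul hBinv).sqrt.trace := integral_nuclearNorm_le_trace_sqrt hD _ hDK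
    _ = hCpsd.sqrt.trace / Real.sqrt B := by
        rw [hCpsd.sqrt_smul hBinv, trace_smul, Real.sqrt_inv, smul_eq_mul, div_eq_inv_mul]

/-- Let `G 0, …, G (B-1)` be i.i.d. random real `m×n` matrices with square-integrable entries,
mean matrix `M = E[G b]`, and row-wise covariance matrix `C = E[(G b − M)(G b − M)ᵀ]`.  Let
`Ḡ = (1/B)·(G 0 + ⋯ + G (B-1))` be their average.  Then
`E[‖M − Ḡ‖_{S1}] ≤ tr(C^{1/2}) / √B`, where `C^{1/2}` is the positive semidefinite square root
of `C`.  (Positive semidefiniteness of `C`, recorded in `hCpsd`, is a consequence of the other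
hypotheses, and is needed to state the square root.) -/
theorem stmt4 {m n B : ℕ} (hB : 0 < B)
    {Ω : Type*} [MeasurableSpace Ω] (μ : Measure Ω) [IsProbabilityMeasure μ]
    (G : Fin B → Ω → (Fin m → Fin n → ℝ))
    (hmeas : ∀ b, Measurable (G b))
    (hindep : iIndepFun G μ)
    (hident : ∀ b b', IdentDistrib (G b) (G b') μ μ)
    (hsq : ∀ b i j, MemLp (fun ω => G b ω i j) 2 μ)
    (M : Matrix (Fin m) (Fin n) ℝ)
    (hmean : ∀ b i j, ∫ ω, G b ω i j ∂μ = M i j)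
    (C : Matrix (Fin m) (Fin m) ℝ)
    (hC : C = Matrix.of fun i i' =>
      ∫ ω, ∑ j, (G ⟨0, hB⟩ ω i j - M i j) * (G ⟨0, hB⟩ ω i' j - M i' j) ∂μ)
    (hCpsd : C.PosSemidef) :
    ∫ ω, nuclearNorm (M - Matrix.of fun i j => (B : ℝ)⁻¹ * ∑ b, G b ω i j) ∂μ
      ≤ hCpsd.sqrt.trace / Real.sqrt B :=
  stmt4_general hB μ G hindep hident hsq M hmean C hC hCpsd
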